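/- If there exists a negligible fcc-compatible function a : Λ → ℝ for a saturated packing Λ (of unit balls in ℝ³), then there exists a constant C such that for all r ≥ 1 and all x, the finite density δ(x,r,Λ) is at most π/√18 + C/r. -/

import Mathlib

/-!
Only the finitely many centres `F = Λ ∩ B(x, r + 1)` carry balls meeting `B(x, r)`,
so `δ(x, r, Λ) ≤ |F| / r³`. Saturation puts each Voronoi cell `Ω(v)` inside `B(v, 2)`,
and distinct cells meet in a null set (a perpendicular bisector), so
`∑_{v ∈ F} vol Ω(v) ≤ vol B(x, r + 3)`. Summing fcc-compatibility over `F` and using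
negligibility gives `√32 |F| ≤ (4π/3)(r + 3)³ + C₁ (r + 1)²`,
and `(4π/3)/√32 = π/√18`.
-/

open MeasureTheory Metric

noncomputable section

/-- The Voronoi cell of `v` in `Λ`: points at least as close to `v` as to any point of `Λ`. -/
def VoronoiCell (Λ : Set (EuclideanSpace ℝ (Fin 3))) (v : EuclideanSpace ℝ (Fin 3)) :
    Set (EuclideanSpace ℝ (Fin 3)) :=
  {x | ∀ w ∈ Λ, dist x v ≤ dist x w}

/-- The finite density `δ(x,r,Λ)`: volume of the part of the union of unit balls of the
packing inside `B(x,r)`, divided by the volume of `B(x,r)`. -/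
def finDensity (Λ : Set (EuclideanSpace ℝ (Fin 3))) (x : EuclideanSpace ℝ (Fin 3)) (r : ℝ) : ℝ :=
  (volume ((⋃ v ∈ Λ, closedBall v 1) ∩ closedBall x r)).toReal /
    (volume (closedBall x r)).toReal

local notation "E3" => EuclideanSpace ℝ (Fin 3)

theorem finite_of_totallyBounded_of_pairwise_le_dist {X : Type*} [PseudoMetricSpace X]
    {S : Set X} (hS : TotallyBounded S) {ε : ℝ} (hε : 0 < ε)
    (hsep : S.Pairwise fun u v => ε ≤ dist u v) : S.Finite := by
  obtain ⟨t, ht, hcover⟩ := totallyBounded_iff.mp hS (ε / 2) (half_pos hε)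
  refine (ht.biUnion fun y _ => Set.Subsingleton.finite (s := S ∩ ball y (ε / 2)) ?_).subset
    fun u hu => ?_
  · rintro u ⟨hu, huy⟩ v ⟨hv, hvy⟩
    by_contra huv
    have := hsep hu hv huv
    have := dist_triangle_right u v y
    rw [mem_ball] at huy hvy
    linarith
  · obtain ⟨y, hy, huy⟩ := Set.mem_iUnion₂.mp (hcover hu)
    exact Set.mem_biUnion hy ⟨hu, huy⟩

theorem measure_biUnion_closedBall_inter_closedBall_le_sum {X : Type*} [PseudoMetricSpace X]
    [MeasurableSpace X] (μ : Measure X) {Λ : Set X} {x : X} {r ρ : ℝ}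
    (hfin : (Λ ∩ closedBall x (r + ρ)).Finite) :
    μ ((⋃ v ∈ Λ, closedBall v ρ) ∩ closedBall x r) ≤
      ∑ v ∈ hfin.toFinset, μ (closedBall v ρ) := by
  refine (measure_mono ?_).trans (measure_biUnion_finset_le _ _)
  rintro y ⟨hy, hyx⟩
  obtain ⟨v, hv, hyv⟩ := Set.mem_iUnion₂.mp hy
  refine Set.mem_biUnion (hfin.mem_toFinset.mpr ⟨hv, ?_⟩) hyv
  rw [mem_closedBall] at hyv hyx ⊢
  linarith [dist_triangle_left v x y]

theorem toReal_volume_closedBall_fin_three (x : E3) {r : ℝ} (hr : 0 ≤ r) :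
    (volume (closedBall x r)).toReal = r ^ 3 * (Real.pi * 4 / 3) := by
  rw [EuclideanSpace.volume_closedBall_fin_three, ENNReal.toReal_mul, ENNReal.toReal_pow,
    ENNReal.toReal_ofReal hr, ENNReal.toReal_ofReal (by positivity)]

theorem finDensity_le_card_div_cube {Λ : Set E3} {x : E3} {r : ℝ} (hr : 0 < r)
    (hfin : (Λ ∩ closedBall x (r + 1)).Finite) :
    finDensity Λ x r ≤ hfin.toFinset.card / r ^ 3 := by
  have hnum : (volume ((⋃ v ∈ Λ, closedBall v 1) ∩ closedBall x r)).toReal ≤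
      hfin.toFinset.card * (Real.pi * 4 / 3) := by
    refine (ENNReal.toReal_mono (ENNReal.sum_ne_top.mpr fun _ _ => measure_closedBall_lt_top.ne)
      (measure_biUnion_closedBall_inter_closedBall_le_sum volume hfin)).trans_eq ?_
    rw [ENNReal.toReal_sum fun _ _ => measure_closedBall_lt_top.ne,
      Finset.sum_congr rfl fun v _ => toReal_volume_closedBall_fin_three v zero_le_one]
    simp
  rw [finDensity, toReal_volume_closedBall_fin_three x hr.le,
    div_le_div_iff₀ (by positivity) (by positivity)]
  exact (mul_le_mul_of_nonneg_right hnum (by positivity)).trans_eq (by ring)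

theorem isClosed_voronoiCell (Λ : Set E3) (v : E3) : IsClosed (VoronoiCell Λ v) := by
  simp only [VoronoiCell, Set.ofPred_forall]
  exact isClosed_biInter fun w _ =>
    isClosed_le (continuous_id.dist continuous_const) (continuous_id.dist continuous_const)

theorem aedisjoint_voronoiCell {Λ : Set E3} {u v : E3} (hu : u ∈ Λ) (hv : v ∈ Λ)
    (huv : u ≠ v) :
    AEDisjoint volume (VoronoiCell Λ u) (VoronoiCell Λ v) := by
  have hsub : VoronoiCell Λ u ∩ VoronoiCell Λ v ⊆ AffineSubspace.perpBisector u v := by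
    rintro x ⟨hxu, hxv⟩
    rw [SetLike.mem_coe, AffineSubspace.mem_perpBisector_iff_dist_eq]
    exact le_antisymm (hxu v hv) (hxv u hu)
  refine measure_mono_null hsub (Measure.addHaar_affineSubspace _ _ fun htop => huv ?_)
  have := htop ▸ AffineSubspace.mem_top ℝ E3 u
  rwa [AffineSubspace.mem_perpBisector_iff_dist_eq, dist_self, eq_comm, dist_eq_zero] at this

theorem voronoiCell_subset_closedBall {Λ : Set E3} {R : ℝ}
    (hcov : ∀ y, ∃ w ∈ Λ, dist y w < R) (v : E3) : VoronoiCell Λ v ⊆ closedBall v R := by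
  intro y hy
  obtain ⟨w, hw, hyw⟩ := hcov y
  exact (hy w hw).trans hyw.le

theorem sum_volume_voronoiCell_le {Λ : Set E3} {R ρ : ℝ} {x : E3}
    (hcov : ∀ y, ∃ w ∈ Λ, dist y w < R) {s : Finset E3}
    (hs : ↑s ⊆ Λ ∩ closedBall x ρ) :
    ∑ v ∈ s, volume (VoronoiCell Λ v) ≤ volume (closedBall x (ρ + R)) := by
  rw [← measure_biUnion_finset₀
    (fun u hu v hv huv => aedisjoint_voronoiCell (hs hu).1 (hs hv).1 huv)
    (fun v _ => (isClosed_voronoiCell Λ v).measurableSet.nullMeasurableSet)]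
  refine measure_mono (Set.iUnion₂_subset fun v hv y hy => ?_)
  have hyv := voronoiCell_subset_closedBall hcov v hy
  have hvx := (hs hv).2
  rw [mem_closedBall] at hyv hvx ⊢
  linarith [dist_triangle y v x]

theorem card_mul_le_volume_add_sum {Λ : Set E3} {R ρ c : ℝ} {x : E3} {a : E3 → ℝ}
    (hcov : ∀ y, ∃ w ∈ Λ, dist y w < R)
    (hc : ∀ v ∈ Λ, c ≤ (volume (VoronoiCell Λ v)).toReal + a v)
    {s : Finset E3} (hs : ↑s ⊆ Λ ∩ closedBall x ρ) :
    s.card * c ≤ (volume (closedBall x (ρ + R))).toReal + ∑ v ∈ s, a v := by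
  have hcells : ∑ v ∈ s, (volume (VoronoiCell Λ v)).toReal ≤
      (volume (closedBall x (ρ + R))).toReal := by
    rw [← ENNReal.toReal_sum fun v _ => ((measure_mono
      (voronoiCell_subset_closedBall hcov v)).trans_lt measure_closedBall_lt_top).ne]
    exact ENNReal.toReal_mono measure_closedBall_lt_top.ne (sum_volume_voronoiCell_le hcov hs)
  calc s.card * c = ∑ _ ∈ s, c := by simp
    _ ≤ ∑ v ∈ s, ((volume (VoronoiCell Λ v)).toReal + a v) :=
      Finset.sum_le_sum fun v hv => hc v (hs hv).1
    _ ≤ _ := by rw [Finset.sum_add_distrib]; linarith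

theorem div_cube_le_of_mul_le {N b c C₁ r : ℝ} (hb : 0 ≤ b) (hc : 0 < c) (hr : 1 ≤ r)
    (h : N * c ≤ (r + 3) ^ 3 * b + C₁ * (r + 1) ^ 2) :
    N / r ^ 3 ≤ b / c + (63 * (b / c) + 4 * |C₁| / c) / r := by
  have hr0 : 0 < r := one_pos.trans_le hr
  have hcube : (r + 3) ^ 3 ≤ r ^ 3 + 63 * r ^ 2 := by nlinarith
  have hquad : C₁ * (r + 1) ^ 2 ≤ 4 * |C₁| * r ^ 2 := by
    have : (r + 1) ^ 2 ≤ 4 * r ^ 2 := by nlinarith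
    nlinarith [mul_le_mul_of_nonneg_right (le_abs_self C₁) (sq_nonneg (r + 1)),
      mul_le_mul_of_nonneg_left this (abs_nonneg C₁)]
  have hN : N * c ≤ b * r ^ 3 + (63 * b + 4 * |C₁|) * r ^ 2 := by
    nlinarith [mul_le_mul_of_nonneg_left hcube hb]
  have : b / c + (63 * (b / c) + 4 * |C₁| / c) / r
      = (b * r ^ 3 + (63 * b + 4 * |C₁|) * r ^ 2) / (c * r ^ 3) := by
    field_simp
  rw [this, div_le_div_iff₀ (by positivity) (by positivity)]
  nlinarith [mul_le_mul_of_nonneg_right hN (pow_nonneg hr0.le 3)]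

theorem pi_mul_four_div_three_div_sqrt_thirtyTwo :
    Real.pi * 4 / 3 / Real.sqrt 32 = Real.pi / Real.sqrt 18 := by
  rw [show (32 : ℝ) = 4 ^ 2 * 2 by norm_num, show (18 : ℝ) = 3 ^ 2 * 2 by norm_num,
    Real.sqrt_mul (by positivity), Real.sqrt_mul (by positivity),
    Real.sqrt_sq (by norm_num), Real.sqrt_sq (by norm_num)]
  field_simp

theorem density_bound_of_negligible_fcc_compatible
    (Λ : Set (EuclideanSpace ℝ (Fin 3)))
    (packing : ∀ u ∈ Λ, ∀ v ∈ Λ, u ≠ v → 2 ≤ dist u v)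
    (saturated : ∀ x : EuclideanSpace ℝ (Fin 3), ∃ v ∈ Λ, dist x v < 2)
    (a : EuclideanSpace ℝ (Fin 3) → ℝ)
    (negligible : ∃ C₁ : ℝ, ∀ x : EuclideanSpace ℝ (Fin 3), ∀ r : ℝ, 1 ≤ r →
      ∑' v : (Λ ∩ closedBall x r : Set (EuclideanSpace ℝ (Fin 3))), a v ≤ C₁ * r ^ 2)
    (fcc_compatible : ∀ v ∈ Λ,
      Real.sqrt 32 ≤ (volume (VoronoiCell Λ v)).toReal + a v) :
    ∃ C : ℝ, ∀ r : ℝ, 1 ≤ r → ∀ x : EuclideanSpace ℝ (Fin 3),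
      finDensity Λ x r ≤ Real.pi / Real.sqrt 18 + C / r := by
  obtain ⟨C₁, hC₁⟩ := negligible
  refine ⟨63 * (Real.pi / Real.sqrt 18) + 4 * |C₁| / Real.sqrt 32, fun r hr x => ?_⟩
  have hfin : (Λ ∩ closedBall x (r + 1)).Finite :=
    finite_of_totallyBounded_of_pairwise_le_dist
      ((isCompact_closedBall x (r + 1)).totallyBounded.subset Set.inter_subset_right) two_pos
      fun u hu v hv => packing u hu.1 v hv.1
  have hsum_a : ∑ v ∈ hfin.toFinset, a v ≤ C₁ * (r + 1) ^ 2 := by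
    have := hC₁ x (r + 1) (by linarith)
    rwa [← hfin.coe_toFinset, Finset.tsum_subtype'] at this
  have hcount := card_mul_le_volume_add_sum saturated fcc_compatible (s := hfin.toFinset)
    hfin.coe_toFinset.subset
  rw [toReal_volume_closedBall_fin_three x (by linarith), show r + 1 + 2 = r + 3 by ring]
    at hcount
  calc finDensity Λ x r ≤ hfin.toFinset.card / r ^ 3 :=
        finDensity_le_card_div_cube (by linarith) hfin
    _ ≤ _ := by
      rw [← pi_mul_four_div_three_div_sqrt_thirtyTwo]
      exact div_cube_le_of_mul_le (by positivity) (by positivity) hr (by linarith)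

end
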